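/- Assume x_0 ∈ range(A^T). The tail-averaged randomized Kaczmarz estimator satisfies the alternative bound E||x̄_t - x_star||^2 ≤ ((2κ_dem^2 - 1)/(t - t_b)) [κ_dem^2 (1 - κ_dem^{-2})^{t_b} ||x_0 - x_star||^2 / (t - t_b) + ||A^+||^2 ||b - A x_star||^2]. -/

import Mathlib

open Matrix Finset
noncomputable section

/-- Squared Euclidean norm of a vector. -/
def vnormSq {k : ℕ} (x : Fin k → ℝ) : ℝ := ∑ i, x i ^ 2

/-- Squared Frobenius norm of a matrix. -/
def frobSq {n d : ℕ} (A : Matrix (Fin n) (Fin d) ℝ) : ℝ := ∑ i, vnormSq (A i)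

/-- Row sampling probability ‖a_i‖²/‖A‖_F² used by randomized Kaczmarz. -/
def rowProb {n d : ℕ} (A : Matrix (Fin n) (Fin d) ℝ) (i : Fin n) : ℝ := vnormSq (A i) / frobSq A

/-- Spectral norm (ℓ²-operator norm) of a matrix. -/
def matSpectralNorm {n d : ℕ} (M : Matrix (Fin n) (Fin d) ℝ) : ℝ :=
  ‖LinearMap.toContinuousLinearMap (Matrix.toEuclideanLin M)‖

/-- The four Penrose conditions characterizing the Moore–Penrose pseudoinverse. -/
def IsMoorePenrose {n d : ℕ} (A : Matrix (Fin n) (Fin d) ℝ) (Ap : Matrix (Fin d) (Fin n) ℝ) : Prop :=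
  A * Ap * A = A ∧ Ap * A * Ap = Ap ∧ (A * Ap)ᵀ = A * Ap ∧ (Ap * A)ᵀ = Ap * A

/-- Demmel condition number κ_dem = ‖A⁺‖ ‖A‖_F. -/
def kdem {n d : ℕ} (A : Matrix (Fin n) (Fin d) ℝ) (Ap : Matrix (Fin d) (Fin n) ℝ) : ℝ :=
  matSpectralNorm Ap * Real.sqrt (frobSq A)

/-- One randomized Kaczmarz update using row i. -/
def rkStep {n d : ℕ} (A : Matrix (Fin n) (Fin d) ℝ) (b : Fin n → ℝ) (i : Fin n) (x : Fin d → ℝ) :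
    Fin d → ℝ := x + ((b i - A i ⬝ᵥ x) / vnormSq (A i)) • A i

/-- Randomized Kaczmarz iterates along a fixed path ω of row indices. -/
def rkSeq {n d : ℕ} (A : Matrix (Fin n) (Fin d) ℝ) (b : Fin n → ℝ) (x0 : Fin d → ℝ)
    (ω : ℕ → Fin n) : ℕ → Fin d → ℝ
  | 0 => x0
  | t + 1 => rkStep A b (ω t) (rkSeq A b x0 ω t)

/-- Extend a finite path of indices to an infinite one. -/
def extendPath {n T : ℕ} [NeZero n] (ω : Fin T → Fin n) : ℕ → Fin n :=
  fun s => if h : s < T then ω ⟨s, h⟩ else 0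

/-- Probability of a finite path of i.i.d. row indices. -/
def pathWeight {n d T : ℕ} (A : Matrix (Fin n) (Fin d) ℝ) (ω : Fin T → Fin n) : ℝ :=
  ∏ t, rowProb A (ω t)

/-- The expected one-step Kaczmarz contraction matrix I - AᵀA/‖A‖_F². -/
def kacMat {n d : ℕ} (A : Matrix (Fin n) (Fin d) ℝ) : Matrix (Fin d) (Fin d) ℝ :=
  1 - (frobSq A)⁻¹ • (Aᵀ * A)

/-- x lies in the row space range(Aᵀ). -/
def inRowSpace {n d : ℕ} (A : Matrix (Fin n) (Fin d) ℝ) (x : Fin d → ℝ) : Prop :=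
  ∃ u : Fin n → ℝ, x = Aᵀ *ᵥ u

/-- RK-RR iterates: Kaczmarz step followed by weight decay by μ. -/
def rrSeq {n d : ℕ} (A : Matrix (Fin n) (Fin d) ℝ) (b : Fin n → ℝ) (μ : ℝ) (x0 : Fin d → ℝ)
    (ω : ℕ → Fin n) : ℕ → Fin d → ℝ
  | 0 => x0
  | t + 1 => μ • rkStep A b (ω t) (rrSeq A b μ x0 ω t)

/-- Orthogonal projection step (I - a aᵀ/‖a‖²) x for row a = A i. -/
def projStep {n d : ℕ} (A : Matrix (Fin n) (Fin d) ℝ) (i : Fin n) (x : Fin d → ℝ) : Fin d → ℝ :=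
  x - ((A i ⬝ᵥ x) / vnormSq (A i)) • A i

/-- RK-RR bias sequence m_{t+1} = μ (I - a aᵀ/‖a‖²) m_t. -/
def biasSeq {n d : ℕ} (A : Matrix (Fin n) (Fin d) ℝ) (μ : ℝ) (m0 : Fin d → ℝ)
    (ω : ℕ → Fin n) : ℕ → Fin d → ℝ
  | 0 => m0
  | t + 1 => μ • projStep A (ω t) (biasSeq A μ m0 ω t)

/-- RK-RR variance sequence v_{t+1} = μ(I - aaᵀ/‖a‖²)v_t + μ (b_i - aᵀx_μ)a/‖a‖² - (1-μ)x_μ. -/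
def varSeq {n d : ℕ} (A : Matrix (Fin n) (Fin d) ℝ) (b : Fin n → ℝ) (μ : ℝ) (xmu : Fin d → ℝ)
    (ω : ℕ → Fin n) : ℕ → Fin d → ℝ
  | 0 => 0
  | t + 1 => μ • projStep A (ω t) (varSeq A b μ xmu ω t)
      + (μ * ((b (ω t) - A (ω t) ⬝ᵥ xmu) / vnormSq (A (ω t)))) • A (ω t)
      - (1 - μ) • xmu

/-- Covariance matrix Σ = I_m + v 1_m 1_mᵀ. -/
def covM (m : ℕ) (v : ℝ) : Matrix (Fin m) (Fin m) ℝ := 1 + v • Matrix.of fun _ _ => 1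

/-- Block Σ_{S,T} of the covariance matrix Σ = I + v 1 1ᵀ. -/
def subBlock {m : ℕ} (v : ℝ) (S T : Finset (Fin m)) : Matrix ↥S ↥T ℝ :=
  (covM m v).submatrix (fun i => i.1) (fun j => j.1)

/-- A deterministic adaptive algorithm that accesses at most t entries of b
(given full access to A) and outputs an estimate of the least-squares solution. -/
structure RowAccessAlg (d t : ℕ) where
  query : (n : ℕ) → Matrix (Fin n) (Fin d) ℝ → (j : Fin t) → (Fin (j : ℕ) → ℝ) → Fin n
  output : (n : ℕ) → Matrix (Fin n) (Fin d) ℝ → (Fin t → ℝ) → Fin d → ℝ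

/-- The successive answers to the algorithm's adaptive queries. -/
def RowAccessAlg.answers {d t : ℕ} (alg : RowAccessAlg d t) (n : ℕ)
    (A : Matrix (Fin n) (Fin d) ℝ) (b : Fin n → ℝ) : (j : ℕ) → j < t → ℝ
  | j, h => b (alg.query n A ⟨j, h⟩ fun i => alg.answers n A b i (i.isLt.trans h))
  termination_by j _ => j

/-- The algorithm's output estimate on the problem (A, b). -/
def RowAccessAlg.run {d t : ℕ} (alg : RowAccessAlg d t) (n : ℕ)
    (A : Matrix (Fin n) (Fin d) ℝ) (b : Fin n → ℝ) : Fin d → ℝ :=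
  alg.output n A fun j => alg.answers n A b j j.isLt

/-!
Write `eₛ = xₛ - x⋆` and `P = I - AᵀA/‖A‖_F²`. Because the residual `b - Ax⋆` is orthogonal to
the columns of `A`, one Kaczmarz step maps `eₛ` to `P eₛ` in conditional mean, and
`E‖eₛ₊₁‖² = E[eₛ ⬝ P eₛ] + ‖b - Ax⋆‖² / ‖A‖_F²`. All errors lie in the row space of `A`, where `P`
is positive semidefinite with Rayleigh quotients at most `q = 1 - κ_dem⁻²`. Hence
`E‖eₛ‖² ≤ qˢ ‖e₀‖² + ‖A⁺‖² ‖b - Ax⋆‖²` and, by the tower property,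
`E[eₛ ⬝ eₛ₊ₖ] = E[eₛ ⬝ Pᵏ eₛ] ≤ qᵏ E‖eₛ‖²`. The squared norm of the tail average is the average
of these cross moments over the square `[t_b, t)²`; summing the bounds, the bias part is at most
`q^{t_b} (1 + q) / (1 - q)²` and the variance part at most `(t - t_b) (1 + q) / (1 - q)`, and
`1 - q = κ_dem⁻²` turns this into the stated bound.
-/

lemma vnormSq_eq_dotProduct {k : ℕ} (x : Fin k → ℝ) : vnormSq x = x ⬝ᵥ x := by
  simp [vnormSq, dotProduct, sq]

lemma vnormSq_nonneg {k : ℕ} (x : Fin k → ℝ) : 0 ≤ vnormSq x :=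
  Finset.sum_nonneg fun _ _ => sq_nonneg _

lemma vnormSq_pos {k : ℕ} {x : Fin k → ℝ} (hx : x ≠ 0) : 0 < vnormSq x :=
  (vnormSq_nonneg x).lt_of_ne' (vnormSq_eq_dotProduct x ▸ dotProduct_self_eq_zero.not.2 hx)

lemma vnormSq_smul {k : ℕ} (c : ℝ) (x : Fin k → ℝ) : vnormSq (c • x) = c ^ 2 * vnormSq x := by
  simp [vnormSq, Finset.mul_sum, mul_pow]

lemma sq_dotProduct_le {k : ℕ} (x y : Fin k → ℝ) : (x ⬝ᵥ y) ^ 2 ≤ vnormSq x * vnormSq y := by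
  simpa [vnormSq, dotProduct] using Finset.sum_mul_sq_le_sq_mul_sq Finset.univ x y

lemma vnormSq_eq_norm_sq {k : ℕ} (x : Fin k → ℝ) : vnormSq x = ‖WithLp.toLp 2 x‖ ^ 2 := by
  simp [EuclideanSpace.real_norm_sq_eq, vnormSq]

lemma vnormSq_mulVec_le_matSpectralNorm {k l : ℕ} (M : Matrix (Fin k) (Fin l) ℝ) (x : Fin l → ℝ) :
    vnormSq (M *ᵥ x) ≤ matSpectralNorm M ^ 2 * vnormSq x := by
  rw [vnormSq_eq_norm_sq, vnormSq_eq_norm_sq, ← mul_pow]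
  gcongr
  exact (LinearMap.toContinuousLinearMap (toEuclideanLin M)).le_opNorm (WithLp.toLp 2 x)

lemma vnormSq_mulVec_le_frobSq {n d : ℕ} (A : Matrix (Fin n) (Fin d) ℝ) (x : Fin d → ℝ) :
    vnormSq (A *ᵥ x) ≤ frobSq A * vnormSq x := by
  rw [vnormSq, frobSq, Finset.sum_mul]
  exact Finset.sum_le_sum fun i _ => sq_dotProduct_le (A i) x

lemma vnormSq_inv_card_smul_sum_sub {ι : Type*} {d : ℕ} {S : Finset ι} (hS : S.Nonempty)
    (v : ι → Fin d → ℝ) (c : Fin d → ℝ) :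
    vnormSq ((S.card : ℝ)⁻¹ • ∑ i ∈ S, v i - c) =
      ((S.card : ℝ)⁻¹) ^ 2 * ∑ i ∈ S, ∑ j ∈ S, (v i - c) ⬝ᵥ (v j - c) := by
  have hcenter : (S.card : ℝ)⁻¹ • ∑ i ∈ S, v i - c = (S.card : ℝ)⁻¹ • ∑ i ∈ S, (v i - c) := by
    rw [Finset.sum_sub_distrib, Finset.sum_const, smul_sub, ← Nat.cast_smul_eq_nsmul ℝ, smul_smul,
      inv_mul_cancel₀ (Nat.cast_ne_zero.2 hS.card_pos.ne'), one_smul]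
  rw [hcenter, vnormSq_smul, vnormSq_eq_dotProduct, sum_dotProduct]
  simp only [dotProduct_sum]

section RowSpace

variable {n d : ℕ} {A : Matrix (Fin n) (Fin d) ℝ} {x y : Fin d → ℝ}

lemma inRowSpace.add (hx : inRowSpace A x) (hy : inRowSpace A y) : inRowSpace A (x + y) := by
  obtain ⟨u, rfl⟩ := hx
  obtain ⟨v, rfl⟩ := hy
  exact ⟨u + v, (mulVec_add _ _ _).symm⟩

lemma inRowSpace.sub (hx : inRowSpace A x) (hy : inRowSpace A y) : inRowSpace A (x - y) := by
  obtain ⟨u, rfl⟩ := hx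
  obtain ⟨v, rfl⟩ := hy
  exact ⟨u - v, (mulVec_sub _ _ _).symm⟩

lemma inRowSpace.smul (c : ℝ) (hx : inRowSpace A x) : inRowSpace A (c • x) := by
  obtain ⟨u, rfl⟩ := hx
  exact ⟨c • u, (mulVec_smul _ _ _).symm⟩

lemma inRowSpace_transpose_mulVec (u : Fin n → ℝ) : inRowSpace A (Aᵀ *ᵥ u) := ⟨u, rfl⟩

lemma inRowSpace_row (i : Fin n) : inRowSpace A (A i) :=
  ⟨Pi.single i 1, by rw [mulVec_single_one]; rfl⟩

variable {Ap : Matrix (Fin d) (Fin n) ℝ}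

namespace IsMoorePenrose

lemma mulVec_mulVec_of_inRowSpace (hAp : IsMoorePenrose A Ap) (hx : inRowSpace A x) :
    Ap *ᵥ (A *ᵥ x) = x := by
  obtain ⟨u, rfl⟩ := hx
  have h : Ap * A * Aᵀ = Aᵀ := by
    rw [← hAp.2.2.2, ← transpose_mul, ← Matrix.mul_assoc, hAp.1]
  rw [mulVec_mulVec, mulVec_mulVec, h]

lemma inRowSpace_mulVec (hAp : IsMoorePenrose A Ap) (b : Fin n → ℝ) : inRowSpace A (Ap *ᵥ b) := by
  refine ⟨Apᵀ *ᵥ (Ap *ᵥ b), ?_⟩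
  rw [mulVec_mulVec, mulVec_mulVec, ← transpose_mul, hAp.2.2.2, hAp.2.1]

lemma transpose_mulVec_residual (hAp : IsMoorePenrose A Ap) (b : Fin n → ℝ) :
    Aᵀ *ᵥ (b - A *ᵥ (Ap *ᵥ b)) = 0 := by
  have h : Aᵀ * (A * Ap) = Aᵀ := by
    rw [← hAp.2.2.1, ← transpose_mul, hAp.1]
  rw [mulVec_sub, mulVec_mulVec, mulVec_mulVec, Matrix.mul_assoc, h, sub_self]

lemma vnormSq_le_of_inRowSpace (hAp : IsMoorePenrose A Ap) (hx : inRowSpace A x) :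
    vnormSq x ≤ matSpectralNorm Ap ^ 2 * vnormSq (A *ᵥ x) := by
  simpa only [mulVec_mulVec_of_inRowSpace hAp hx] using
    vnormSq_mulVec_le_matSpectralNorm Ap (A *ᵥ x)

end IsMoorePenrose

lemma frobSq_nonneg (A : Matrix (Fin n) (Fin d) ℝ) : 0 ≤ frobSq A :=
  Finset.sum_nonneg fun _ _ => vnormSq_nonneg _

lemma kdem_sq (A : Matrix (Fin n) (Fin d) ℝ) (Ap : Matrix (Fin d) (Fin n) ℝ) :
    kdem A Ap ^ 2 = matSpectralNorm Ap ^ 2 * frobSq A := by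
  rw [kdem, mul_pow, Real.sq_sqrt (frobSq_nonneg A)]

lemma one_le_kdem_sq [NeZero n] (hrows : ∀ i, A i ≠ 0) (hAp : IsMoorePenrose A Ap) :
    1 ≤ kdem A Ap ^ 2 := by
  have hrow := vnormSq_pos (hrows 0)
  have := (IsMoorePenrose.vnormSq_le_of_inRowSpace hAp (inRowSpace_row 0)).trans
    (mul_le_mul_of_nonneg_left (vnormSq_mulVec_le_frobSq A (A 0)) (sq_nonneg _))
  rw [kdem_sq]
  nlinarith

end RowSpace

namespace Matrix.PosSemidef

variable {d : ℕ} {M : Matrix (Fin d) (Fin d) ℝ}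

lemma dotProduct_mulVec_comm (hM : M.PosSemidef) (x y : Fin d → ℝ) :
    y ⬝ᵥ M *ᵥ x = x ⬝ᵥ M *ᵥ y := by
  have hMt : Mᵀ = M := by simpa [conjTranspose_eq_transpose_of_trivial] using hM.isHermitian.eq
  rw [dotProduct_mulVec, ← mulVec_transpose, hMt, dotProduct_comm]

lemma sq_dotProduct_mulVec_le (hM : M.PosSemidef) (x y : Fin d → ℝ) :
    (x ⬝ᵥ M *ᵥ y) ^ 2 ≤ (x ⬝ᵥ M *ᵥ x) * (y ⬝ᵥ M *ᵥ y) := by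
  have hquad : ∀ s : ℝ, 0 ≤ (y ⬝ᵥ M *ᵥ y) * (s * s) + 2 * (x ⬝ᵥ M *ᵥ y) * s + x ⬝ᵥ M *ᵥ x := by
    intro s
    have h := hM.dotProduct_mulVec_nonneg (x + s • y)
    simp only [star_trivial, mulVec_add, mulVec_smul, add_dotProduct, dotProduct_add,
      smul_dotProduct, dotProduct_smul, hM.dotProduct_mulVec_comm x y, smul_eq_mul] at h
    linarith
  have := discrim_le_zero hquad
  rw [discrim] at this
  nlinarith

lemma vnormSq_mulVec_le (hM : M.PosSemidef) {q : ℝ} {x : Fin d → ℝ}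
    (hx : x ⬝ᵥ M *ᵥ x ≤ q * vnormSq x) (hMx : (M *ᵥ x) ⬝ᵥ M *ᵥ (M *ᵥ x) ≤ q * vnormSq (M *ᵥ x)) :
    vnormSq (M *ᵥ x) ≤ q ^ 2 * vnormSq x := by
  have hnonneg := hM.dotProduct_mulVec_nonneg
  simp only [star_trivial] at hnonneg
  -- Cauchy–Schwarz for the form of `M`: `‖Mx‖⁴ = (x ⬝ M(Mx))² ≤ (x ⬝ Mx)(Mx ⬝ M(Mx))`.
  have hCS : vnormSq (M *ᵥ x) ^ 2 ≤ (q * vnormSq x) * (q * vnormSq (M *ᵥ x)) := by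
    have hMx_eq : vnormSq (M *ᵥ x) = x ⬝ᵥ M *ᵥ (M *ᵥ x) := by
      rw [vnormSq_eq_dotProduct, hM.dotProduct_mulVec_comm]
    calc vnormSq (M *ᵥ x) ^ 2 = (x ⬝ᵥ M *ᵥ (M *ᵥ x)) ^ 2 := by rw [hMx_eq]
      _ ≤ (x ⬝ᵥ M *ᵥ x) * ((M *ᵥ x) ⬝ᵥ M *ᵥ (M *ᵥ x)) := hM.sq_dotProduct_mulVec_le _ _
      _ ≤ (q * vnormSq x) * (q * vnormSq (M *ᵥ x)) :=
        mul_le_mul hx hMx (hnonneg _) ((hnonneg x).trans hx)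
  rcases (vnormSq_nonneg (M *ᵥ x)).eq_or_lt with h0 | hpos
  · rw [← h0]
    nlinarith [hnonneg x, vnormSq_nonneg x]
  · nlinarith

end Matrix.PosSemidef

section KacMat

variable {n d : ℕ} {A : Matrix (Fin n) (Fin d) ℝ} {Ap : Matrix (Fin d) (Fin n) ℝ}
  {x : Fin d → ℝ}

lemma kacMat_mulVec (A : Matrix (Fin n) (Fin d) ℝ) (x : Fin d → ℝ) :
    kacMat A *ᵥ x = x - (frobSq A)⁻¹ • (Aᵀ *ᵥ (A *ᵥ x)) := by
  rw [kacMat, sub_mulVec, one_mulVec, smul_mulVec, mulVec_mulVec]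

lemma inRowSpace.kacMat_mulVec (hx : inRowSpace A x) : inRowSpace A (kacMat A *ᵥ x) := by
  rw [_root_.kacMat_mulVec]
  exact hx.sub ((inRowSpace_transpose_mulVec _).smul _)

lemma dotProduct_kacMat_mulVec_self (A : Matrix (Fin n) (Fin d) ℝ) (x : Fin d → ℝ) :
    x ⬝ᵥ kacMat A *ᵥ x = vnormSq x - (frobSq A)⁻¹ * vnormSq (A *ᵥ x) := by
  rw [kacMat_mulVec, dotProduct_sub, dotProduct_smul, dotProduct_mulVec, vecMul_transpose,
    vnormSq_eq_dotProduct, vnormSq_eq_dotProduct, smul_eq_mul, dotProduct_comm]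

lemma kacMat_posSemidef (A : Matrix (Fin n) (Fin d) ℝ) : (kacMat A).PosSemidef := by
  refine .of_dotProduct_mulVec_nonneg ?_ fun x => ?_
  · simp [IsHermitian, kacMat, conjTranspose_eq_transpose_of_trivial, transpose_mul]
  · rw [star_trivial, dotProduct_kacMat_mulVec_self, sub_nonneg]
    rcases (frobSq_nonneg A).eq_or_lt with h0 | hpos
    · simp [← h0, vnormSq_nonneg]
    · rw [inv_mul_le_iff₀ hpos]
      exact vnormSq_mulVec_le_frobSq A x

lemma dotProduct_kacMat_mulVec_le (hAp : IsMoorePenrose A Ap) (hx : inRowSpace A x) :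
    x ⬝ᵥ kacMat A *ᵥ x ≤ (1 - (kdem A Ap ^ 2)⁻¹) * vnormSq x := by
  rw [dotProduct_kacMat_mulVec_self, kdem_sq, sub_mul, one_mul, sub_le_sub_iff_left, mul_inv,
    mul_comm (matSpectralNorm Ap ^ 2)⁻¹, mul_assoc]
  refine mul_le_mul_of_nonneg_left ?_ (inv_nonneg.2 (frobSq_nonneg A))
  rcases (sq_nonneg (matSpectralNorm Ap)).eq_or_lt with h0 | hpos
  · simp [← h0, vnormSq_nonneg]
  · rw [inv_mul_le_iff₀ hpos]
    exact IsMoorePenrose.vnormSq_le_of_inRowSpace hAp hx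

lemma dotProduct_kacMat_pow_mulVec_le (hAp : IsMoorePenrose A Ap) (hκ : 1 ≤ kdem A Ap ^ 2)
    (k : ℕ) (hx : inRowSpace A x) :
    x ⬝ᵥ (kacMat A ^ k) *ᵥ x ≤ (1 - (kdem A Ap ^ 2)⁻¹) ^ k * vnormSq x := by
  have hq : 0 ≤ 1 - (kdem A Ap ^ 2)⁻¹ := sub_nonneg.2 (inv_le_one_of_one_le₀ hκ)
  induction k using Nat.twoStepInduction generalizing x with
  | zero => simp [vnormSq_eq_dotProduct]
  | one => simpa using dotProduct_kacMat_mulVec_le hAp hx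
  | more k ih _ =>
    have hPx := hx.kacMat_mulVec
    have hcontract : vnormSq (kacMat A *ᵥ x) ≤ (1 - (kdem A Ap ^ 2)⁻¹) ^ 2 * vnormSq x :=
      (kacMat_posSemidef A).vnormSq_mulVec_le (dotProduct_kacMat_mulVec_le hAp hx)
        (dotProduct_kacMat_mulVec_le hAp hPx)
    calc x ⬝ᵥ (kacMat A ^ (k + 2)) *ᵥ x
        = (kacMat A *ᵥ x) ⬝ᵥ (kacMat A ^ k) *ᵥ (kacMat A *ᵥ x) := by
          rw [pow_succ, pow_succ', ← mulVec_mulVec, ← mulVec_mulVec,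
            (kacMat_posSemidef A).dotProduct_mulVec_comm, dotProduct_comm]
      _ ≤ (1 - (kdem A Ap ^ 2)⁻¹) ^ k * vnormSq (kacMat A *ᵥ x) := ih hPx
      _ ≤ (1 - (kdem A Ap ^ 2)⁻¹) ^ k * ((1 - (kdem A Ap ^ 2)⁻¹) ^ 2 * vnormSq x) := by gcongr
      _ = (1 - (kdem A Ap ^ 2)⁻¹) ^ (k + 2) * vnormSq x := by ring

end KacMat

/-- Expectation of `f` over paths `ω : Fin T → ι` of i.i.d. draws from the weights `p`. -/
def pathExp {ι : Type*} [Fintype ι] (p : ι → ℝ) (T : ℕ) (f : (Fin T → ι) → ℝ) : ℝ :=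
  ∑ ω, (∏ t, p (ω t)) * f ω

section PathExp

variable {ι : Type*} [Fintype ι] {p : ι → ℝ} {T : ℕ}

lemma pathExp_succ (p : ι → ℝ) (f : (Fin (T + 1) → ι) → ℝ) :
    pathExp p (T + 1) f = pathExp p T fun ω => ∑ i, p i * f (Fin.snoc ω i) := by
  rw [pathExp, ← (Fin.snocEquiv fun _ => ι).sum_comp, Fintype.sum_prod_type_right, pathExp]
  refine Finset.sum_congr rfl fun ω _ => ?_
  rw [Finset.mul_sum]
  refine Finset.sum_congr rfl fun i _ => ?_
  change (∏ t, p (Fin.snoc (α := fun _ => ι) ω i t)) * f (Fin.snoc ω i) = _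
  simp only [Fin.prod_univ_castSucc, Fin.snoc_castSucc, Fin.snoc_last, mul_assoc]

lemma pathExp_const (hp : ∑ i, p i = 1) (c : ℝ) : pathExp p T (fun _ => c) = c := by
  rw [pathExp, ← Finset.sum_mul, ← Fintype.sum_pow, hp, one_pow, one_mul]

lemma pathExp_add (f g : (Fin T → ι) → ℝ) :
    pathExp p T (fun ω => f ω + g ω) = pathExp p T f + pathExp p T g := by
  simp only [pathExp, mul_add, Finset.sum_add_distrib]

lemma pathExp_const_mul (c : ℝ) (f : (Fin T → ι) → ℝ) :
    pathExp p T (fun ω => c * f ω) = c * pathExp p T f := by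
  simp only [pathExp, Finset.mul_sum, mul_left_comm]

lemma pathExp_sum {κ : Type*} (s : Finset κ) (f : κ → (Fin T → ι) → ℝ) :
    pathExp p T (fun ω => ∑ k ∈ s, f k ω) = ∑ k ∈ s, pathExp p T (f k) := by
  simp only [pathExp, Finset.mul_sum]
  exact Finset.sum_comm

lemma pathExp_mono (hp : 0 ≤ p) {f g : (Fin T → ι) → ℝ} (h : ∀ ω, f ω ≤ g ω) :
    pathExp p T f ≤ pathExp p T g :=
  Finset.sum_le_sum fun ω _ =>
    mul_le_mul_of_nonneg_left (h ω) (Finset.prod_nonneg fun t _ => hp (ω t))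

end PathExp

section DoubleGeometricSums

variable {q : ℝ}

lemma sum_range_succ_sum_range_succ_of_symm (f : ℕ → ℕ → ℝ) (hf : ∀ a b, f a b = f b a)
    (m : ℕ) :
    ∑ a ∈ range (m + 1), ∑ a' ∈ range (m + 1), f a a' =
      ∑ a ∈ range m, ∑ a' ∈ range m, f a a' + 2 * ∑ a ∈ range m, f a m + f m m := by
  simp only [sum_range_succ, sum_add_distrib, hf m]
  ring

lemma sum_range_sum_range_pow_max (q : ℝ) (m : ℕ) :
    ∑ a ∈ range m, ∑ a' ∈ range m, q ^ max a a' = ∑ j ∈ range m, (2 * j + 1) * q ^ j := by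
  induction m with
  | zero => simp
  | succ m ih =>
    have hcol : ∑ a ∈ range m, q ^ max a m = m * q ^ m := by
      rw [sum_congr rfl fun a ha => by rw [max_eq_right (mem_range.1 ha).le], sum_const,
        card_range, nsmul_eq_mul]
    rw [sum_range_succ_sum_range_succ_of_symm _ fun a b => by rw [max_comm], ih, hcol, max_self,
      sum_range_succ]
    ring

lemma sum_range_sum_range_pow_max_le (hq0 : 0 ≤ q) (hq1 : q < 1) (m : ℕ) :
    ∑ a ∈ range m, ∑ a' ∈ range m, q ^ max a a' ≤ (1 + q) / (1 - q) ^ 2 := by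
  have hsum : HasSum (fun j : ℕ => (2 * j + 1) * q ^ j) ((1 + q) / (1 - q) ^ 2) := by
    have hj := hasSum_coe_mul_geometric_of_norm_lt_one (r := q) (by rwa [Real.norm_of_nonneg hq0])
    have hf : (fun j : ℕ => (2 * j + 1) * q ^ j) = fun j : ℕ => 2 * (j * q ^ j) + q ^ j := by
      funext j
      ring
    have hlim : (1 + q) / (1 - q) ^ 2 = 2 * (q / (1 - q) ^ 2) + (1 - q)⁻¹ := by
      field_simp [(sub_pos.2 hq1).ne']
      ring
    rw [hf, hlim]
    exact (hj.mul_left 2).add (hasSum_geometric_of_lt_one hq0 hq1)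
  rw [sum_range_sum_range_pow_max]
  exact sum_le_hasSum _ (fun j _ => by positivity) hsum

lemma sum_range_sum_range_pow_dist_le (hq0 : 0 ≤ q) (hq1 : q < 1) (m : ℕ) :
    ∑ a ∈ range m, ∑ a' ∈ range m, q ^ Nat.dist a a' ≤ m * ((1 + q) / (1 - q)) := by
  induction m with
  | zero => simp
  | succ m ih =>
    have hrow : ∑ a ∈ range m, q ^ Nat.dist a m ≤ q / (1 - q) := by
      have hreflect : ∑ a ∈ range m, q ^ Nat.dist a m = ∑ j ∈ range m, q ^ (j + 1) := by
        rw [← sum_range_reflect]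
        refine sum_congr rfl fun j hj => ?_
        have := mem_range.1 hj
        rw [Nat.dist_eq_sub_of_le (by omega)]
        congr 1
        omega
      have hgeom : HasSum (fun j : ℕ => q ^ (j + 1)) (q / (1 - q)) := by
        simpa [pow_succ', div_eq_mul_inv] using (hasSum_geometric_of_lt_one hq0 hq1).mul_left q
      rw [hreflect]
      exact sum_le_hasSum _ (fun j _ => by positivity) hgeom
    have hdiag : (1 + q) / (1 - q) = 2 * (q / (1 - q)) + 1 := by
      field_simp [(sub_pos.2 hq1).ne']
      ring
    rw [sum_range_succ_sum_range_succ_of_symm _ fun a b => by rw [Nat.dist_comm], Nat.dist_self,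
      pow_zero, Nat.cast_succ, add_one_mul, hdiag]
    rw [hdiag] at ih
    linarith

lemma sum_Ico_sum_Ico_pow_max_add_pow_dist_le (hq0 : 0 ≤ q) (hq1 : q < 1) {V W : ℝ}
    (hV : 0 ≤ V) (hW : 0 ≤ W) (a b : ℕ) :
    ∑ s ∈ Ico a b, ∑ s' ∈ Ico a b, (q ^ max s s' * V + q ^ Nat.dist s s' * W) ≤
      q ^ a * ((1 + q) / (1 - q) ^ 2) * V + (b - a : ℕ) * ((1 + q) / (1 - q)) * W := by
  simp only [sum_add_distrib, ← sum_mul, sum_Ico_eq_sum_range, max_add_add_left, pow_add,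
    ← mul_sum, Nat.dist_add_add_left]
  gcongr
  · exact sum_range_sum_range_pow_max_le hq0 hq1 _
  · exact sum_range_sum_range_pow_dist_le hq0 hq1 _

end DoubleGeometricSums

section KaczmarzStep

variable {n d : ℕ} {A : Matrix (Fin n) (Fin d) ℝ} {b : Fin n → ℝ} {xstar : Fin d → ℝ}

lemma rowProb_nonneg (A : Matrix (Fin n) (Fin d) ℝ) : 0 ≤ rowProb A :=
  fun _ => div_nonneg (vnormSq_nonneg _) (frobSq_nonneg A)

lemma frobSq_pos [NeZero n] (hrows : ∀ i, A i ≠ 0) : 0 < frobSq A :=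
  Finset.sum_pos (fun i _ => vnormSq_pos (hrows i)) Finset.univ_nonempty

lemma sum_rowProb [NeZero n] (hrows : ∀ i, A i ≠ 0) : ∑ i, rowProb A i = 1 := by
  simp only [rowProb]
  rw [← Finset.sum_div, ← frobSq, div_self (frobSq_pos hrows).ne']

lemma rkStep_sub (A : Matrix (Fin n) (Fin d) ℝ) (b : Fin n → ℝ) (i : Fin n) (x xstar : Fin d → ℝ) :
    rkStep A b i x - xstar = (x - xstar) +
      (((b - A *ᵥ xstar) i - A i ⬝ᵥ (x - xstar)) / vnormSq (A i)) • A i := by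
  have hcoef : (b - A *ᵥ xstar) i - A i ⬝ᵥ (x - xstar) = b i - A i ⬝ᵥ x := by
    rw [Pi.sub_apply, dotProduct_sub]
    exact sub_sub_sub_cancel_right _ _ _
  rw [hcoef, rkStep]
  abel

lemma sum_rowProb_smul_rkStep_sub [NeZero n] (hrows : ∀ i, A i ≠ 0)
    (hres : Aᵀ *ᵥ (b - A *ᵥ xstar) = 0) (x : Fin d → ℝ) :
    ∑ i, rowProb A i • (rkStep A b i x - xstar) = kacMat A *ᵥ (x - xstar) := by
  have hterm : ∀ i, rowProb A i • (rkStep A b i x - xstar) = rowProb A i • (x - xstar) +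
      (frobSq A)⁻¹ • (((b - A *ᵥ xstar) - A *ᵥ (x - xstar)) i • A i) := by
    intro i
    rw [rkStep_sub, smul_add, smul_smul, smul_smul, rowProb, Pi.sub_apply]
    congr 2
    field_simp [(vnormSq_pos (hrows i)).ne']
    rfl
  rw [Finset.sum_congr rfl fun i _ => hterm i, Finset.sum_add_distrib, ← Finset.sum_smul,
    sum_rowProb hrows, one_smul, ← Finset.smul_sum, ← vecMul_eq_sum, ← mulVec_transpose,
    mulVec_sub, hres, zero_sub, smul_neg, ← sub_eq_add_neg, kacMat_mulVec]

lemma sum_rowProb_mul_vnormSq_rkStep_sub [NeZero n] (hrows : ∀ i, A i ≠ 0) (x : Fin d → ℝ) :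
    ∑ i, rowProb A i * vnormSq (rkStep A b i x - xstar) =
      (x - xstar) ⬝ᵥ kacMat A *ᵥ (x - xstar) + (frobSq A)⁻¹ * vnormSq (b - A *ᵥ xstar) := by
  have hterm : ∀ i, rowProb A i * vnormSq (rkStep A b i x - xstar) =
      (frobSq A)⁻¹ * (vnormSq (A i) * vnormSq (x - xstar) - (A i ⬝ᵥ (x - xstar)) ^ 2
        + (b - A *ᵥ xstar) i ^ 2) := by
    intro i
    have hrow := (vnormSq_pos (hrows i)).ne'
    rw [rkStep_sub, vnormSq_eq_dotProduct, vnormSq_eq_dotProduct (x - xstar), rowProb]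
    simp only [add_dotProduct, dotProduct_add, smul_dotProduct, dotProduct_smul, smul_eq_mul,
      ← vnormSq_eq_dotProduct, dotProduct_comm (x - xstar) (A i)]
    field_simp
    ring
  have hAe : ∑ i, (A i ⬝ᵥ (x - xstar)) ^ 2 = vnormSq (A *ᵥ (x - xstar)) := rfl
  rw [Finset.sum_congr rfl fun i _ => hterm i, ← Finset.mul_sum, Finset.sum_add_distrib,
    Finset.sum_sub_distrib, ← Finset.sum_mul, hAe, dotProduct_kacMat_mulVec_self, ← frobSq]
  field_simp [(frobSq_pos hrows).ne']
  rfl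

end KaczmarzStep

section KaczmarzPath

variable {n d : ℕ} [NeZero n]

lemma extendPath_snoc {T : ℕ} (ω : Fin T → Fin n) (i : Fin n) :
    extendPath (Fin.snoc ω i) = Function.update (extendPath ω) T i := by
  funext s
  rcases lt_trichotomy s T with h | rfl | h
  · simp [extendPath, h, h.ne, Nat.lt_succ_of_lt h, Fin.snoc]
  · simp [extendPath, Fin.snoc]
  · simp [extendPath, h.ne', h.not_gt, Nat.lt_succ_iff.not.2 h.not_ge]

lemma pathExp_extendPath_succ (p : Fin n → ℝ) (T : ℕ) (F : (ℕ → Fin n) → ℝ) :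
    pathExp p (T + 1) (fun ω => F (extendPath ω)) =
      pathExp p T fun ω => ∑ i, p i * F (Function.update (extendPath ω) T i) := by
  simp only [pathExp_succ, extendPath_snoc]

lemma pathExp_extendPath_of_le {p : Fin n → ℝ} (hp : ∑ i, p i = 1) {F : (ℕ → Fin n) → ℝ}
    {T T' : ℕ} (hF : ∀ ω ω', (∀ j < T, ω j = ω' j) → F ω = F ω') (hT : T ≤ T') :
    pathExp p T' (fun ω => F (extendPath ω)) = pathExp p T (fun ω => F (extendPath ω)) := by
  induction T', hT using Nat.le_induction with
  | base => rfl
  | succ T' hT ih =>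
    rw [pathExp_extendPath_succ, ← ih]
    congr 1
    funext ω
    have hupd : ∀ i, F (Function.update (extendPath ω) T' i) = F (extendPath ω) := fun i =>
      hF _ _ fun j hj => Function.update_of_ne (by omega) _ _
    simp only [hupd, ← Finset.sum_mul, hp, one_mul]

variable (A : Matrix (Fin n) (Fin d) ℝ) (b : Fin n → ℝ) (x0 : Fin d → ℝ)

omit [NeZero n] in
lemma rkSeq_congr {ω ω' : ℕ → Fin n} {s : ℕ} (h : ∀ j < s, ω j = ω' j) :
    rkSeq A b x0 ω s = rkSeq A b x0 ω' s := by
  induction s with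
  | zero => rfl
  | succ s ih =>
    rw [rkSeq, rkSeq, h s s.lt_succ_self, ih fun j hj => h j (hj.trans s.lt_succ_self)]

omit [NeZero n] in
lemma rkSeq_update_succ (ω : ℕ → Fin n) (T : ℕ) (i : Fin n) :
    rkSeq A b x0 (Function.update ω T i) (T + 1) = rkStep A b i (rkSeq A b x0 ω T) := by
  rw [rkSeq, Function.update_self,
    rkSeq_congr A b x0 fun j hj => Function.update_of_ne hj.ne _ _]

end KaczmarzPath

section KaczmarzMoments

variable {n d : ℕ} [NeZero n] {A : Matrix (Fin n) (Fin d) ℝ} {Ap : Matrix (Fin d) (Fin n) ℝ}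
  {b : Fin n → ℝ} {x0 xstar : Fin d → ℝ}

omit [NeZero n] in
lemma inRowSpace_rkSeq_sub (h0 : inRowSpace A x0) (hxs : inRowSpace A xstar) (ω : ℕ → Fin n) :
    ∀ s, inRowSpace A (rkSeq A b x0 ω s - xstar)
  | 0 => h0.sub hxs
  | s + 1 => by
    rw [rkSeq, rkStep_sub]
    exact (inRowSpace_rkSeq_sub h0 hxs ω s).add ((inRowSpace_row _).smul _)

lemma pathExp_vnormSq_rkSeq_sub_le (hrows : ∀ i, A i ≠ 0) (hAp : IsMoorePenrose A Ap)
    (h0 : inRowSpace A x0) (hxs : inRowSpace A xstar) (s : ℕ) :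
    pathExp (rowProb A) s (fun ω => vnormSq (rkSeq A b x0 (extendPath ω) s - xstar)) ≤
      (1 - (kdem A Ap ^ 2)⁻¹) ^ s * vnormSq (x0 - xstar) +
        matSpectralNorm Ap ^ 2 * vnormSq (b - A *ᵥ xstar) := by
  have hκ := one_le_kdem_sq hrows hAp
  have hq : 0 ≤ 1 - (kdem A Ap ^ 2)⁻¹ := sub_nonneg.2 (inv_le_one_of_one_le₀ hκ)
  induction s with
  | zero =>
    simp only [rkSeq, pathExp_const (sum_rowProb hrows), pow_zero, one_mul, le_add_iff_nonneg_right]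
    exact mul_nonneg (sq_nonneg _) (vnormSq_nonneg _)
  | succ s ih =>
    -- The noise level `‖A⁺‖² ‖b - Ax⋆‖²` is a fixed point of the recursion.
    have hfix : (1 - (kdem A Ap ^ 2)⁻¹) * matSpectralNorm Ap ^ 2 + (frobSq A)⁻¹ =
        matSpectralNorm Ap ^ 2 := by
      have hS : matSpectralNorm Ap ≠ 0 := by
        intro h; rw [kdem_sq, h] at hκ; norm_num at hκ
      have hF := (frobSq_pos hrows).ne'
      rw [kdem_sq]
      field_simp
      ring
    calc pathExp (rowProb A) (s + 1)
          (fun ω => vnormSq (rkSeq A b x0 (extendPath ω) (s + 1) - xstar))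
        = pathExp (rowProb A) s (fun ω => (rkSeq A b x0 (extendPath ω) s - xstar) ⬝ᵥ
            kacMat A *ᵥ (rkSeq A b x0 (extendPath ω) s - xstar) +
              (frobSq A)⁻¹ * vnormSq (b - A *ᵥ xstar)) := by
          refine (pathExp_extendPath_succ _ s fun ω =>
            vnormSq (rkSeq A b x0 ω (s + 1) - xstar)).trans ?_
          simp only [rkSeq_update_succ, sum_rowProb_mul_vnormSq_rkStep_sub hrows]
      _ ≤ pathExp (rowProb A) s (fun ω => (1 - (kdem A Ap ^ 2)⁻¹) *
            vnormSq (rkSeq A b x0 (extendPath ω) s - xstar) +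
              (frobSq A)⁻¹ * vnormSq (b - A *ᵥ xstar)) :=
          pathExp_mono (rowProb_nonneg A) fun ω => add_le_add_left
            (dotProduct_kacMat_mulVec_le hAp (inRowSpace_rkSeq_sub h0 hxs _ s)) _
      _ ≤ (1 - (kdem A Ap ^ 2)⁻¹) * ((1 - (kdem A Ap ^ 2)⁻¹) ^ s * vnormSq (x0 - xstar) +
            matSpectralNorm Ap ^ 2 * vnormSq (b - A *ᵥ xstar)) +
              (frobSq A)⁻¹ * vnormSq (b - A *ᵥ xstar) := by
          rw [pathExp_add, pathExp_const_mul, pathExp_const (sum_rowProb hrows)]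
          gcongr
      _ = _ := by
          linear_combination vnormSq (b - A *ᵥ xstar) * hfix

lemma pathExp_dotProduct_mulVec_rkSeq_sub (hrows : ∀ i, A i ≠ 0)
    (hres : Aᵀ *ᵥ (b - A *ᵥ xstar) = 0) (s k : ℕ) (M : Matrix (Fin d) (Fin d) ℝ) :
    pathExp (rowProb A) (s + k) (fun ω => (rkSeq A b x0 (extendPath ω) s - xstar) ⬝ᵥ
        M *ᵥ (rkSeq A b x0 (extendPath ω) (s + k) - xstar)) =
      pathExp (rowProb A) s (fun ω => (rkSeq A b x0 (extendPath ω) s - xstar) ⬝ᵥ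
        (M * kacMat A ^ k) *ᵥ (rkSeq A b x0 (extendPath ω) s - xstar)) := by
  induction k generalizing M with
  | zero => simp
  | succ k ih =>
    have hstep : ∀ (u x : Fin d → ℝ), ∑ i, rowProb A i * (u ⬝ᵥ M *ᵥ (rkStep A b i x - xstar)) =
        u ⬝ᵥ (M * kacMat A) *ᵥ (x - xstar) := by
      intro u x
      simp only [← mulVec_mulVec, ← sum_rowProb_smul_rkStep_sub hrows hres, mulVec_sum,
        dotProduct_sum, mulVec_smul, dotProduct_smul, smul_eq_mul]
    refine (pathExp_extendPath_succ _ (s + k) fun ω => (rkSeq A b x0 ω s - xstar) ⬝ᵥ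
      M *ᵥ (rkSeq A b x0 ω (s + k + 1) - xstar)).trans ?_
    have hprefix : ∀ (ω : ℕ → Fin n) i,
        rkSeq A b x0 (Function.update ω (s + k) i) s = rkSeq A b x0 ω s := fun ω i =>
      rkSeq_congr A b x0 fun j hj => Function.update_of_ne (by omega) _ _
    simp only [rkSeq_update_succ, hprefix, hstep]
    rw [ih, Matrix.mul_assoc, ← pow_succ']

lemma pathExp_dotProduct_rkSeq_sub_le (hrows : ∀ i, A i ≠ 0) (hAp : IsMoorePenrose A Ap)
    (hres : Aᵀ *ᵥ (b - A *ᵥ xstar) = 0) (h0 : inRowSpace A x0) (hxs : inRowSpace A xstar)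
    {s s' t : ℕ} (hs : s ≤ t) (hs' : s' ≤ t) :
    pathExp (rowProb A) t (fun ω => (rkSeq A b x0 (extendPath ω) s - xstar) ⬝ᵥ
        (rkSeq A b x0 (extendPath ω) s' - xstar)) ≤
      (1 - (kdem A Ap ^ 2)⁻¹) ^ max s s' * vnormSq (x0 - xstar) +
        (1 - (kdem A Ap ^ 2)⁻¹) ^ Nat.dist s s' * (matSpectralNorm Ap ^ 2 *
          vnormSq (b - A *ᵥ xstar)) := by
  wlog h : s ≤ s' generalizing s s'
  · simpa only [dotProduct_comm, max_comm, Nat.dist_comm] using this hs' hs (le_of_not_ge h)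
  obtain ⟨k, rfl⟩ := Nat.exists_eq_add_of_le h
  have hκ := one_le_kdem_sq hrows hAp
  have hq : 0 ≤ 1 - (kdem A Ap ^ 2)⁻¹ := sub_nonneg.2 (inv_le_one_of_one_le₀ hκ)
  have hprefix : ∀ ω ω' : ℕ → Fin n, (∀ j < s + k, ω j = ω' j) →
      (rkSeq A b x0 ω s - xstar) ⬝ᵥ (rkSeq A b x0 ω (s + k) - xstar) =
        (rkSeq A b x0 ω' s - xstar) ⬝ᵥ (rkSeq A b x0 ω' (s + k) - xstar) := fun ω ω' hω => by
    rw [rkSeq_congr A b x0 fun j hj => hω j (by omega), rkSeq_congr A b x0 hω]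
  calc _ = pathExp (rowProb A) (s + k) (fun ω => (rkSeq A b x0 (extendPath ω) s - xstar) ⬝ᵥ
          (rkSeq A b x0 (extendPath ω) (s + k) - xstar)) :=
        pathExp_extendPath_of_le (sum_rowProb hrows) hprefix hs'
    _ = pathExp (rowProb A) s (fun ω => (rkSeq A b x0 (extendPath ω) s - xstar) ⬝ᵥ
          (kacMat A ^ k) *ᵥ (rkSeq A b x0 (extendPath ω) s - xstar)) := by
        simpa using pathExp_dotProduct_mulVec_rkSeq_sub hrows hres s k 1
    _ ≤ pathExp (rowProb A) s (fun ω => (1 - (kdem A Ap ^ 2)⁻¹) ^ k *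
          vnormSq (rkSeq A b x0 (extendPath ω) s - xstar)) :=
        pathExp_mono (rowProb_nonneg A) fun ω =>
          dotProduct_kacMat_pow_mulVec_le hAp hκ k (inRowSpace_rkSeq_sub h0 hxs _ s)
    _ ≤ (1 - (kdem A Ap ^ 2)⁻¹) ^ k * ((1 - (kdem A Ap ^ 2)⁻¹) ^ s * vnormSq (x0 - xstar) +
          matSpectralNorm Ap ^ 2 * vnormSq (b - A *ᵥ xstar)) := by
        rw [pathExp_const_mul]
        gcongr
        exact pathExp_vnormSq_rkSeq_sub_le hrows hAp h0 hxs s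
    _ = _ := by
        rw [max_eq_right h, Nat.dist_eq_sub_of_le h, Nat.add_sub_cancel_left, pow_add]
        ring

lemma sum_Ico_sum_Ico_pathExp_dotProduct_rkSeq_sub_le (hrows : ∀ i, A i ≠ 0)
    (hAp : IsMoorePenrose A Ap) (hres : Aᵀ *ᵥ (b - A *ᵥ xstar) = 0) (h0 : inRowSpace A x0)
    (hxs : inRowSpace A xstar) (tb t : ℕ) :
    ∑ s ∈ Ico tb t, ∑ s' ∈ Ico tb t, pathExp (rowProb A) t (fun ω =>
        (rkSeq A b x0 (extendPath ω) s - xstar) ⬝ᵥ (rkSeq A b x0 (extendPath ω) s' - xstar)) ≤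
      (2 * kdem A Ap ^ 2 - 1) * (kdem A Ap ^ 2 * (1 - (kdem A Ap ^ 2)⁻¹) ^ tb *
        vnormSq (x0 - xstar) +
          (t - tb : ℕ) * (matSpectralNorm Ap ^ 2 * vnormSq (b - A *ᵥ xstar))) := by
  have hκ := one_le_kdem_sq hrows hAp
  have hκ0 : kdem A Ap ≠ 0 := by
    rintro h
    norm_num [h] at hκ
  set q := 1 - (kdem A Ap ^ 2)⁻¹ with hq
  have hq0 : 0 ≤ q := sub_nonneg.2 (inv_le_one_of_one_le₀ hκ)
  have hq1 : q < 1 := sub_lt_self _ (inv_pos.2 (by linarith))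
  have hmax : (1 + q) / (1 - q) ^ 2 = (2 * kdem A Ap ^ 2 - 1) * kdem A Ap ^ 2 := by
    rw [hq]
    field_simp
    ring
  have hdist : (1 + q) / (1 - q) = 2 * kdem A Ap ^ 2 - 1 := by
    rw [hq]
    field_simp
    ring
  calc _ ≤ ∑ s ∈ Ico tb t, ∑ s' ∈ Ico tb t, (q ^ max s s' * vnormSq (x0 - xstar) +
          q ^ Nat.dist s s' * (matSpectralNorm Ap ^ 2 * vnormSq (b - A *ᵥ xstar))) := by
        gcongr with s hs s' hs'
        exact pathExp_dotProduct_rkSeq_sub_le hrows hAp hres h0 hxs (mem_Ico.1 hs).2.le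
          (mem_Ico.1 hs').2.le
    _ ≤ _ := sum_Ico_sum_Ico_pow_max_add_pow_dist_le hq0 hq1 (vnormSq_nonneg _)
          (mul_nonneg (sq_nonneg _) (vnormSq_nonneg _)) tb t
    _ = _ := by
        rw [hmax, hdist]
        ring

end KaczmarzMoments

/-- alternative TARK error bound:
E‖x̄_t - x⋆‖² ≤ ((2κ_dem² - 1)/(t - t_b)) [κ_dem²(1 - κ_dem⁻²)^{t_b} ‖x_0 - x⋆‖²/(t - t_b)
  + ‖A⁺‖² ‖b - Ax⋆‖²], assuming x_0 ∈ range(Aᵀ). -/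
theorem tark_alternative_bound {n d : ℕ} [NeZero n]
    (A : Matrix (Fin n) (Fin d) ℝ) (b : Fin n → ℝ) (hrows : ∀ i, A i ≠ 0)
    (Ap : Matrix (Fin d) (Fin n) ℝ) (hAp : IsMoorePenrose A Ap)
    (xstar : Fin d → ℝ) (hx : xstar = Ap *ᵥ b)
    (x0 : Fin d → ℝ) (h0 : inRowSpace A x0)
    (tb t : ℕ) (htb : tb < t) :
    ∑ ω : Fin t → Fin n, pathWeight A ω *
        vnormSq ((((t : ℝ) - (tb : ℝ))⁻¹) •
          (∑ s ∈ Finset.Ico tb t, rkSeq A b x0 (extendPath ω) s) - xstar)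
      ≤ (2 * kdem A Ap ^ 2 - 1) / ((t : ℝ) - (tb : ℝ)) *
          (kdem A Ap ^ 2 * (1 - (kdem A Ap ^ 2)⁻¹) ^ tb / ((t : ℝ) - (tb : ℝ)) *
              vnormSq (x0 - xstar)
            + matSpectralNorm Ap ^ 2 * vnormSq (b - A *ᵥ xstar)) := by
  have hres : Aᵀ *ᵥ (b - A *ᵥ xstar) = 0 := hx ▸ IsMoorePenrose.transpose_mulVec_residual hAp b
  have hxs : inRowSpace A xstar := hx ▸ IsMoorePenrose.inRowSpace_mulVec hAp b
  have hm : (t : ℝ) - tb = (t - tb : ℕ) := (Nat.cast_sub htb.le).symm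
  have hm0 : (t : ℝ) - tb ≠ 0 := sub_ne_zero.2 (Nat.cast_injective.ne htb.ne')
  change pathExp (rowProb A) t _ ≤ _
  calc _ = ((t : ℝ) - tb)⁻¹ ^ 2 * ∑ s ∈ Ico tb t, ∑ s' ∈ Ico tb t, pathExp (rowProb A) t
          (fun ω => (rkSeq A b x0 (extendPath ω) s - xstar) ⬝ᵥ
            (rkSeq A b x0 (extendPath ω) s' - xstar)) := by
        simp only [hm, ← Nat.card_Ico, vnormSq_inv_card_smul_sum_sub (nonempty_Ico.2 htb),
          pathExp_const_mul, pathExp_sum]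
    _ ≤ ((t : ℝ) - tb)⁻¹ ^ 2 * ((2 * kdem A Ap ^ 2 - 1) *
          (kdem A Ap ^ 2 * (1 - (kdem A Ap ^ 2)⁻¹) ^ tb * vnormSq (x0 - xstar) +
            (t - tb : ℕ) * (matSpectralNorm Ap ^ 2 * vnormSq (b - A *ᵥ xstar)))) := by
        gcongr
        exact sum_Ico_sum_Ico_pathExp_dotProduct_rkSeq_sub_le hrows hAp hres h0 hxs tb t
    _ = _ := by
        rw [← hm]
        field_simp
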